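/- Let A be a symmetric operator and B a non-negative self-adjoint operator on a Hilbert space H, and let λ > 0. Then for suitable vectors v, u (e.g. v, u such that all expressions below are defined), the weak commutator satisfies [A, (B+λ)^{-1}]^w(v, u) = [B, A]^w((B+λ)^{-1} v, (B+λ)^{-1} u). -/
import Mathlib


open scoped ComplexInnerProductSpace
open LinearPMap

/-- Let `A` be symmetric and `B` non-negative self-adjoint, `l > 0`, and let
`R = (B + l)⁻¹` be the (bounded, everywhere defined) resolvent.  Then the weak commutator
satisfies `[A, (B+l)⁻¹]ʷ(v, u) = [B, A]ʷ((B+l)⁻¹ v, (B+l)⁻¹ u)` for suitable `v, u`. -/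
theorem stmt1 {H : Type*} [NormedAddCommGroup H] [InnerProductSpace ℂ H] [CompleteSpace H]
    (A B : H →ₗ.[ℂ] H)
    (hAdense : Dense (A.domain : Set H))
    (hAsym : ∀ x y : A.domain, ⟪A x, (y : H)⟫ = ⟪(x : H), A y⟫)
    (hBsa : IsSelfAdjoint B)
    (hBnonneg : ∀ u : B.domain, 0 ≤ (⟪(u : H), B u⟫).re)
    (l : ℝ) (hl : 0 < l)
    -- the resolvent `R = (B + l)⁻¹`
    (R : H →L[ℂ] H)
    (hRmem : ∀ u : H, R u ∈ B.domain)
    (hRright : ∀ u : H, (B ⟨R u, hRmem u⟩ : H) + (l : ℂ) • R u = u)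
    (hRleft : ∀ u : B.domain, R ((B u : H) + (l : ℂ) • (u : H)) = u)
    -- suitable vectors: all expressions below are defined
    (u v : H) (huA : u ∈ A.domain) (hvA' : v ∈ A†.domain)
    (hRuA : R u ∈ A.domain) (hRvA' : R v ∈ A†.domain) :
    ⟪A† ⟨v, hvA'⟩, R u⟫ - ⟪ContinuousLinearMap.adjoint R v, A ⟨u, huA⟩⟫
      = ⟪B ⟨R v, hRmem v⟩, A ⟨R u, hRuA⟩⟫ - ⟪A† ⟨R v, hRvA'⟩, B ⟨R u, hRmem u⟩⟫ := by
  have hadj : B† = B := hBsa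
  have hBfa := LinearPMap.adjoint_isFormalAdjoint hBsa.dense_domain (T := B)
  rw [hadj] at hBfa
  have hAfa := LinearPMap.adjoint_isFormalAdjoint hAdense (T := A)
  -- `R` is symmetric
  have hRsym : (R : H →ₗ[ℂ] H).IsSymmetric := by
    intro x y
    simp only [ContinuousLinearMap.coe_coe]
    conv_lhs => rw [← hRright y]
    conv_rhs => rw [← hRright x]
    rw [inner_add_right, inner_add_left, inner_smul_right, inner_smul_left,
      hBfa ⟨R x, hRmem x⟩ ⟨R y, hRmem y⟩, Complex.conj_ofReal]
  have hRadj : ContinuousLinearMap.adjoint R = R :=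
    (ContinuousLinearMap.isSelfAdjoint_iff_isSymmetric.mpr hRsym).adjoint_eq
  rw [hRadj]
  have h1 := hAfa ⟨v, hvA'⟩ ⟨R u, hRuA⟩
  have h2 := hAfa ⟨R v, hRvA'⟩ ⟨u, huA⟩
  have h3 := hAfa ⟨R v, hRvA'⟩ ⟨R u, hRuA⟩
  simp only [] at h1 h2 h3
  calc ⟪A† ⟨v, hvA'⟩, R u⟫ - ⟪R v, A ⟨u, huA⟩⟫
      = ⟪v, A ⟨R u, hRuA⟩⟫ - ⟪A† ⟨R v, hRvA'⟩, u⟫ := by rw [h1, h2]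
    _ = ⟪(B ⟨R v, hRmem v⟩ : H) + (l : ℂ) • R v, A ⟨R u, hRuA⟩⟫
        - ⟪A† ⟨R v, hRvA'⟩, (B ⟨R u, hRmem u⟩ : H) + (l : ℂ) • R u⟫ := by
        rw [hRright v, hRright u]
    _ = ⟪B ⟨R v, hRmem v⟩, A ⟨R u, hRuA⟩⟫ - ⟪A† ⟨R v, hRvA'⟩, B ⟨R u, hRmem u⟩⟫ := by
        rw [inner_add_left, inner_add_right, inner_smul_left, inner_smul_right,
          Complex.conj_ofReal, h3]
        ring
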